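/- arXiv:1311.7549 — 2 statements merged into one kernel-verified Lean document; each statement's English description precedes it below -/
import Mathlib

section
/- Let u : ℝ^N → ℝ (N ≥ 1) be continuous with a limit c_∞ ∈ ℝ ∪ {±∞} as |x| → ∞. Suppose that for every affine half space H ⊂ ℝ^N, with Q_H denoting the reflection across ∂H, either u(x) ≥ u(Q_H(x)) for all x ∈ H, or u(x) ≤ u(Q_H(x)) for all x ∈ H. Then there exists z ∈ ℝ^N such that x ↦ u(x - z) or x ↦ -u(x - z) is radially symmetric and nonincreasing in the radial variable. -/
/-!
If `u` is not identically equal to its limit `c` at infinity, then for every unit direction `e`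
the parameters `λ` for which the first, resp. second, alternative holds form two closed sets
covering `ℝ`. Neither is empty: otherwise `u` would be monotone along `e`, hence equal to `c`.
By connectedness of `ℝ` they meet, and at a common `λ` the function `u` is invariant under the
reflection. This `λ` is unique, since two parallel symmetry hyperplanes make `u` periodic, hence
constant. The symmetry hyperplanes in the directions of an orthonormal basis meet in a point `z`;
composing those reflections shows that `u` is symmetric about `z`, which, by uniqueness, forces
every symmetry hyperplane to pass through `z`. So `u` is radial about `z`. Finally, if the radial
profile increased somewhere, then iterating the reflection across the hyperplane halfway between
the two radii would push every value below `c`; if it decreased somewhere, above `c`. Both at once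
would make the profile constant.
-/

open RealInnerProductSpace Filter Topology OrderDual

theorem le_of_tendsto_atTop_of_le_add {α : Type*} [Preorder α] [TopologicalSpace α]
    [ClosedIciTopology α] {g : ℝ → α} {c : α} {a p : ℝ} (hp : 0 < p)
    (hg : Tendsto g atTop (𝓝 c)) (hstep : ∀ s, a ≤ s → g s ≤ g (s + p)) : g a ≤ c := by
  have hchain : ∀ k : ℕ, g a ≤ g (a + k * p) := by
    intro k
    induction k with
    | zero => simp
    | succ k ih =>
      have hk : a + ((k + 1 : ℕ) : ℝ) * p = a + k * p + p := by push_cast; ring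
      exact hk ▸ ih.trans (hstep _ (le_add_of_nonneg_right (by positivity)))
  have hseq : Tendsto (fun k : ℕ => a + k * p) atTop atTop :=
    tendsto_atTop_add_const_left _ _ (tendsto_natCast_atTop_atTop.atTop_mul_const hp)
  exact ge_of_tendsto (hg.comp hseq) (Eventually.of_forall hchain)

theorem tendsto_add_smul_atTop_cocompact {F : Type*} [NormedAddCommGroup F] [NormedSpace ℝ F]
    [ProperSpace F] (x : F) {v : F} (hv : v ≠ 0) :
    Tendsto (fun t : ℝ => x + t • v) atTop (cocompact F) := by
  rw [← Metric.cobounded_eq_cocompact]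
  refine (tendsto_const_add_cobounded x).comp (tendsto_norm_atTop_iff_cobounded.mp ?_)
  simpa only [norm_smul, Real.norm_eq_abs] using
    tendsto_abs_atTop_atTop.atTop_mul_const (norm_pos_iff.mpr hv)

theorem le_of_tendsto_cocompact_of_le_add {F α : Type*} [NormedAddCommGroup F] [NormedSpace ℝ F]
    [ProperSpace F] [Preorder α] [TopologicalSpace α] [ClosedIciTopology α] {u : F → α} {c : α}
    (hlim : Tendsto u (cocompact F) (𝓝 c)) {v : F} (hv : v ≠ 0) (h : ∀ x, u x ≤ u (x + v))
    (y : F) : u y ≤ c := by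
  simpa using le_of_tendsto_atTop_of_le_add (a := 0) one_pos
    (hlim.comp (tendsto_add_smul_atTop_cocompact y hv))
    fun t _ => by simpa [add_smul, add_assoc] using h (y + t • v)

theorem eq_of_tendsto_cocompact_of_le_add {F α : Type*} [NormedAddCommGroup F] [NormedSpace ℝ F]
    [ProperSpace F] [PartialOrder α] [TopologicalSpace α] [OrderClosedTopology α] {u : F → α}
    {c : α} (hlim : Tendsto u (cocompact F) (𝓝 c)) {v : F} (hv : v ≠ 0)
    (h : ∀ x, u x ≤ u (x + v)) (y : F) : u y = c :=
  le_antisymm (le_of_tendsto_cocompact_of_le_add hlim hv h y)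
    (le_of_tendsto_cocompact_of_le_add (u := toDual ∘ u) (c := toDual c) hlim (neg_ne_zero.mpr hv)
      (fun x => by simpa using h (x + -v)) y)

variable {E α : Type*} [NormedAddCommGroup E] [InnerProductSpace ℝ E]

/-- For a unit vector `e`, the reflection `Q_H` across the boundary of `H = {x | lam < ⟪x, e⟫}`. -/
def hyperplaneReflection (e : E) (lam : ℝ) (x : E) : E := x - (2 * (⟪x, e⟫ - lam)) • e

/-- Composing with `toDual` turns this into the reverse comparison `u x ≤ u (Q_H x)`. -/
def HalfSpaceDominates [Preorder α] (u : E → α) (e : E) (lam : ℝ) : Prop :=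
  ∀ x, lam < ⟪x, e⟫ → u (hyperplaneReflection e lam x) ≤ u x

def ReflectionInvariant (u : E → α) (e : E) (lam : ℝ) : Prop :=
  ∀ x, u (hyperplaneReflection e lam x) = u x

section Reflection

variable {e : E}

theorem inner_add_smul_of_norm_eq_one (he : ‖e‖ = 1) (x : E) (t : ℝ) :
    ⟪x + t • e, e⟫ = ⟪x, e⟫ + t := by
  rw [inner_add_left, real_inner_smul_left, real_inner_self_eq_norm_sq, he]; ring

theorem inner_hyperplaneReflection (he : ‖e‖ = 1) (lam : ℝ) (x : E) :
    ⟪hyperplaneReflection e lam x, e⟫ = 2 * lam - ⟪x, e⟫ := by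
  rw [hyperplaneReflection, inner_sub_left, real_inner_smul_left, real_inner_self_eq_norm_sq, he]
  ring

theorem hyperplaneReflection_add_smul (he : ‖e‖ = 1) (lam : ℝ) (x : E) (t : ℝ) :
    hyperplaneReflection e lam (x + t • e) = x + (2 * (lam - ⟪x, e⟫) - t) • e := by
  rw [hyperplaneReflection, inner_add_smul_of_norm_eq_one he]; module

theorem hyperplaneReflection_hyperplaneReflection (he : ‖e‖ = 1) (lam lam' : ℝ) (x : E) :
    hyperplaneReflection e lam (hyperplaneReflection e lam' x) = x + (2 * (lam - lam')) • e := by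
  rw [hyperplaneReflection, inner_hyperplaneReflection he, hyperplaneReflection]; module

theorem hyperplaneReflection_inner_add (he : ‖e‖ = 1) (z w : E) :
    hyperplaneReflection e ⟪z, e⟫ (z + w) = z + Submodule.reflection (ℝ ∙ e)ᗮ w := by
  rw [Submodule.reflection_orthogonal_apply, Submodule.reflection_singleton_apply, he,
    hyperplaneReflection, inner_add_left, real_inner_comm e w]
  module

end Reflection

theorem ReflectionInvariant.of_halfSpaceDominates [PartialOrder α] {u : E → α} {e : E} {lam : ℝ}
    (he : ‖e‖ = 1) (hA : HalfSpaceDominates u e lam)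
    (hB : HalfSpaceDominates (toDual ∘ u) e lam) : ReflectionInvariant u e lam := by
  intro x
  rcases lt_trichotomy lam ⟪x, e⟫ with hx | hx | hx
  · exact le_antisymm (hA x hx) (hB x hx)
  · rw [hyperplaneReflection, ← hx, sub_self, mul_zero, zero_smul, sub_zero]
  · have hy : lam < ⟪hyperplaneReflection e lam x, e⟫ := by
      rw [inner_hyperplaneReflection he]; linarith
    have := le_antisymm (hA _ hy) (hB _ hy)
    rw [hyperplaneReflection_hyperplaneReflection he, sub_self, mul_zero, zero_smul,
      add_zero] at this
    exact this.symm

theorem isClosed_setOf_halfSpaceDominates [Preorder α] [TopologicalSpace α]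
    [OrderClosedTopology α] {u : E → α} (hu : Continuous u) (e : E) :
    IsClosed {lam | HalfSpaceDominates u e lam} := by
  simp only [HalfSpaceDominates, Set.ofPred_forall]
  exact isClosed_iInter fun x => isClosed_imp (isOpen_lt continuous_id continuous_const)
    (isClosed_le (hu.comp (by unfold hyperplaneReflection; fun_prop)) continuous_const)

section Invariance

variable [ProperSpace E] [LinearOrder α] [TopologicalSpace α] [OrderClosedTopology α]
  {u : E → α} {c : α} {e : E} {lam lam' : ℝ}

theorem eq_of_forall_halfSpaceDominates (hlim : Tendsto u (cocompact E) (𝓝 c)) (he : ‖e‖ = 1)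
    (h : ∀ lam, HalfSpaceDominates u e lam) (y : E) : u y = c := by
  refine eq_of_tendsto_cocompact_of_le_add hlim (ne_zero_of_norm_ne_zero (he ▸ one_ne_zero))
    (fun x => ?_) y
  have := h (⟪x, e⟫ + 1 / 2) (x + (1 : ℝ) • e) (by rw [inner_add_smul_of_norm_eq_one he]; linarith)
  rwa [hyperplaneReflection_add_smul he, show 2 * (⟪x, e⟫ + 1 / 2 - ⟪x, e⟫) - 1 = (0 : ℝ) by ring,
    zero_smul, add_zero, one_smul] at this

theorem exists_reflectionInvariant (hu : Continuous u) (hlim : Tendsto u (cocompact E) (𝓝 c))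
    (hnc : ∃ y, u y ≠ c) (he : ‖e‖ = 1)
    (hhalf : ∀ lam, HalfSpaceDominates u e lam ∨ HalfSpaceDominates (toDual ∘ u) e lam) :
    ∃ lam, ReflectionInvariant u e lam := by
  obtain ⟨y, hy⟩ := hnc
  have hA : ∃ lam, HalfSpaceDominates u e lam := by
    by_contra! h
    exact hy (eq_of_forall_halfSpaceDominates (u := toDual ∘ u) hlim he
      (fun lam => (hhalf lam).resolve_left (h lam)) y)
  have hB : ∃ lam, HalfSpaceDominates (toDual ∘ u) e lam := by
    by_contra! h
    exact hy (eq_of_forall_halfSpaceDominates hlim he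
      (fun lam => (hhalf lam).resolve_right (h lam)) y)
  obtain ⟨lam, -, hlamA, hlamB⟩ := isPreconnected_closed_iff.mp isPreconnected_univ _ _
    (isClosed_setOf_halfSpaceDominates hu e)
    (isClosed_setOf_halfSpaceDominates (continuous_toDual.comp hu) e)
    (fun lam _ => hhalf lam) (by rwa [Set.univ_inter]) (by rwa [Set.univ_inter])
  exact ⟨lam, .of_halfSpaceDominates he hlamA hlamB⟩

theorem ReflectionInvariant.unique (hlim : Tendsto u (cocompact E) (𝓝 c)) (hnc : ∃ y, u y ≠ c)
    (he : ‖e‖ = 1) (h : ReflectionInvariant u e lam) (h' : ReflectionInvariant u e lam') :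
    lam = lam' := by
  obtain ⟨y, hy⟩ := hnc
  by_contra hne
  refine hy (eq_of_tendsto_cocompact_of_le_add hlim (v := (2 * (lam - lam')) • e) ?_
    (fun x => ?_) y)
  · exact smul_ne_zero (by intro h; apply hne; linarith)
      (ne_zero_of_norm_ne_zero (he ▸ one_ne_zero))
  · rw [← hyperplaneReflection_hyperplaneReflection he, h, h']

end Invariance

theorem ReflectionInvariant.add_sum {u : E → α} {ι : Type*} {b : ι → E} (hb : Orthonormal ℝ b)
    {lam : ι → ℝ} (s : Finset ι) (h : ∀ i ∈ s, ReflectionInvariant u (b i) (lam i)) (x : E) :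
    u (x + ∑ i ∈ s, (2 * (lam i - ⟪x, b i⟫)) • b i) = u x := by
  classical
  induction s using Finset.induction_on with
  | empty => simp
  | insert j s hj ih =>
    have hperp : ⟪x + ∑ i ∈ s, (2 * (lam i - ⟪x, b i⟫)) • b i, b j⟫ = ⟪x, b j⟫ := by
      simp [inner_add_left, sum_inner, real_inner_smul_left, orthonormal_iff_ite.mp hb, hj]
    calc u (x + ∑ i ∈ insert j s, (2 * (lam i - ⟪x, b i⟫)) • b i)
        = u (hyperplaneReflection (b j) (lam j) (x + ∑ i ∈ s, (2 * (lam i - ⟪x, b i⟫)) • b i)) := by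
          rw [hyperplaneReflection, hperp, Finset.sum_insert hj]; congr 1; module
      _ = u (x + ∑ i ∈ s, (2 * (lam i - ⟪x, b i⟫)) • b i) := h j (Finset.mem_insert_self j s) _
      _ = u x := ih fun i hi => h i (Finset.mem_insert_of_mem hi)

theorem ReflectionInvariant.of_pointReflection {u : E → α} {e z : E} {lam : ℝ}
    (hz : ∀ x, u ((2 : ℝ) • z - x) = u x) (h : ReflectionInvariant u e lam) :
    ReflectionInvariant u e (2 * ⟪z, e⟫ - lam) := by
  intro x
  calc u (hyperplaneReflection e (2 * ⟪z, e⟫ - lam) x)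
      = u ((2 : ℝ) • z - hyperplaneReflection e lam ((2 : ℝ) • z - x)) := by
        simp only [hyperplaneReflection, inner_sub_left, real_inner_smul_left]; congr 1; module
    _ = u ((2 : ℝ) • z - x) := by rw [hz, h]
    _ = u x := hz x

theorem exists_center_of_reflectionInvariant [FiniteDimensional ℝ E] {u : E → α}
    (hex : ∀ e : E, ‖e‖ = 1 → ∃ lam, ReflectionInvariant u e lam)
    (huniq : ∀ e : E, ‖e‖ = 1 → ∀ lam lam',
      ReflectionInvariant u e lam → ReflectionInvariant u e lam' → lam = lam') :
    ∃ z : E, ∀ e : E, ‖e‖ = 1 → ReflectionInvariant u e ⟪z, e⟫ := by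
  let b := stdOrthonormalBasis ℝ E
  choose lam hlam using fun i => hex (b i) (b.orthonormal.1 i)
  refine ⟨∑ i, lam i • b i, fun e he => ?_⟩
  -- composing the reflections in the coordinate hyperplanes gives the point reflection
  have hpoint : ∀ x, u ((2 : ℝ) • ∑ i, lam i • b i - x) = u x := by
    intro x
    have hsum : ∑ i, (2 * (lam i - ⟪x, b i⟫)) • b i
        = (2 : ℝ) • ∑ i, lam i • b i - (2 : ℝ) • ∑ i, ⟪b i, x⟫ • b i := by
      simp only [Finset.smul_sum, ← Finset.sum_sub_distrib, real_inner_comm x]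
      congr 1 with i; module
    convert ReflectionInvariant.add_sum b.orthonormal Finset.univ (fun i _ => hlam i) x using 2
    rw [hsum, b.sum_repr']; module
  obtain ⟨mu, hmu⟩ := hex e he
  have := huniq e he _ _ hmu (hmu.of_pointReflection hpoint)
  convert hmu using 2
  linarith

theorem apply_add_eq_of_norm_eq {u : E → α} {z : E}
    (hz : ∀ e : E, ‖e‖ = 1 → ReflectionInvariant u e ⟪z, e⟫) {w w' : E} (h : ‖w‖ = ‖w'‖) :
    u (z + w) = u (z + w') := by
  rcases eq_or_ne w w' with rfl | hne
  · rfl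
  have hv : w - w' ≠ 0 := sub_ne_zero.mpr hne
  have he : ‖‖w - w'‖⁻¹ • (w - w')‖ = 1 := norm_smul_inv_norm hv
  have hspan : (ℝ ∙ ‖w - w'‖⁻¹ • (w - w')) = (ℝ ∙ (w - w')) :=
    Submodule.span_singleton_smul_eq (inv_ne_zero (norm_ne_zero_iff.mpr hv)).isUnit _
  rw [← hz _ he (z + w), hyperplaneReflection_inner_add he]
  simp only [hspan, Submodule.reflection_sub h]

section Profile

variable [ProperSpace E] [LinearOrder α] [TopologicalSpace α] [OrderClosedTopology α]
  {u : E → α} {c : α} {z : E}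

theorem apply_add_smul_le_of_apply_add_smul_lt (hlim : Tendsto u (cocompact E) (𝓝 c))
    (hrad : ∀ w w' : E, ‖w‖ = ‖w'‖ → u (z + w) = u (z + w')) {e : E} (he : ‖e‖ = 1)
    (hhalf : ∀ lam, HalfSpaceDominates u e lam ∨ HalfSpaceDominates (toDual ∘ u) e lam)
    {a b : ℝ} (ha : 0 ≤ a) (hab : a ≤ b) (hlt : u (z + a • e) < u (z + b • e))
    {s : ℝ} (hs : 0 ≤ s) : u (z + s • e) ≤ c := by
  have hab' : a < b := hab.lt_of_ne (by rintro rfl; exact hlt.false)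
  have hrefl : ∀ t : ℝ, hyperplaneReflection e (⟪z, e⟫ + (a + b) / 2) (z + t • e)
      = z + (a + b - t) • e := fun t => by
    rw [hyperplaneReflection_add_smul he]; ring_nf
  have hdom : HalfSpaceDominates u e (⟪z, e⟫ + (a + b) / 2) := by
    refine (hhalf _).resolve_right fun h => hlt.not_ge ?_
    have := h (z + b • e) (by rw [inner_add_smul_of_norm_eq_one he]; linarith)
    rwa [hrefl, add_sub_cancel_right] at this
  refine le_of_tendsto_atTop_of_le_add (by linarith : 0 < a + b)
    (hlim.comp (tendsto_add_smul_atTop_cocompact z (ne_zero_of_norm_ne_zero (he ▸ one_ne_zero))))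
    fun t ht => ?_
  have := hdom (z + (t + (a + b)) • e) (by rw [inner_add_smul_of_norm_eq_one he]; linarith)
  rwa [hrefl, show a + b - (t + (a + b)) = -t by ring,
    hrad _ (t • e) (by rw [neg_smul, norm_neg])] at this

theorem radially_antitone_or_monotone (hlim : Tendsto u (cocompact E) (𝓝 c))
    (hhalf : ∀ e : E, ‖e‖ = 1 → ∀ lam,
      HalfSpaceDominates u e lam ∨ HalfSpaceDominates (toDual ∘ u) e lam)
    (hrad : ∀ w w' : E, ‖w‖ = ‖w'‖ → u (z + w) = u (z + w')) :
    (∀ x y : E, ‖x‖ ≤ ‖y‖ → u (z + y) ≤ u (z + x)) ∨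
      (∀ x y : E, ‖x‖ ≤ ‖y‖ → u (z + x) ≤ u (z + y)) := by
  rcases subsingleton_or_nontrivial E with hE | hE
  · exact Or.inl fun x y _ => by rw [Subsingleton.elim x y]
  obtain ⟨e, he⟩ := exists_norm_eq E zero_le_one
  have hprofile : ∀ x, u (z + x) = u (z + ‖x‖ • e) := fun x => hrad _ _ (by simp [norm_smul, he])
  suffices AntitoneOn (fun r : ℝ => u (z + r • e)) (Set.Ici 0) ∨
      MonotoneOn (fun r : ℝ => u (z + r • e)) (Set.Ici 0) by
    refine this.imp (fun h x y hxy => ?_) (fun h x y hxy => ?_) <;>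
      simp only [hprofile x, hprofile y] <;> exact h (norm_nonneg _) (norm_nonneg _) hxy
  by_contra! h
  simp only [AntitoneOn, MonotoneOn, Set.mem_Ici, not_forall, not_le, exists_prop] at h
  obtain ⟨⟨a, ha, b, -, hab, hlt⟩, ⟨a', ha', b', -, hab', hlt'⟩⟩ := h
  have hle : ∀ s : ℝ, 0 ≤ s → u (z + s • e) ≤ c := fun _ hs =>
    apply_add_smul_le_of_apply_add_smul_lt hlim hrad he (hhalf e he) ha hab hlt hs
  have hge : ∀ s : ℝ, 0 ≤ s → c ≤ u (z + s • e) := fun _ hs =>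
    apply_add_smul_le_of_apply_add_smul_lt (u := toDual ∘ u) (c := toDual c) hlim
      (fun w w' h => congrArg toDual (hrad w w' h)) he (fun lam => (hhalf e he lam).symm)
      ha' hab' hlt' hs
  have hb : 0 ≤ b := ha.trans hab
  exact hlt.ne ((le_antisymm (hle a ha) (hge a ha)).trans (le_antisymm (hle b hb) (hge b hb)).symm)

end Profile

theorem exists_center_radially_antitone_or_monotone [FiniteDimensional ℝ E] [LinearOrder α]
    [TopologicalSpace α] [OrderClosedTopology α] {u : E → α} (hu : Continuous u) {c : α}
    (hlim : Tendsto u (cocompact E) (𝓝 c))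
    (hhalf : ∀ e : E, ‖e‖ = 1 → ∀ lam,
      HalfSpaceDominates u e lam ∨ HalfSpaceDominates (toDual ∘ u) e lam) :
    ∃ z : E, (∀ x y : E, ‖x‖ ≤ ‖y‖ → u (z + y) ≤ u (z + x)) ∨
      (∀ x y : E, ‖x‖ ≤ ‖y‖ → u (z + x) ≤ u (z + y)) := by
  by_cases hconst : ∀ y, u y = c
  · exact ⟨0, Or.inl fun x y _ => by rw [hconst, hconst]⟩
  simp only [not_forall] at hconst
  obtain ⟨z, hz⟩ := exists_center_of_reflectionInvariant
    (fun e he => exists_reflectionInvariant hu hlim hconst he (hhalf e he))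
    (fun e he _ _ => ReflectionInvariant.unique hlim hconst he)
  exact ⟨z, radially_antitone_or_monotone hlim hhalf fun _ _ => apply_add_eq_of_norm_eq hz⟩

theorem exists_antitoneOn_eq_comp_norm {F β : Type*} [NormedAddCommGroup F] [NormedSpace ℝ F]
    [PartialOrder β] {g : F → β} (hg : ∀ x y : F, ‖x‖ ≤ ‖y‖ → g y ≤ g x) :
    ∃ f : ℝ → β, AntitoneOn f (Set.Ici 0) ∧ ∀ x, g x = f ‖x‖ := by
  rcases subsingleton_or_nontrivial F with hF | hF
  · exact ⟨fun _ => g 0, fun _ _ _ _ _ => le_rfl, fun x => by rw [Subsingleton.elim x 0]⟩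
  obtain ⟨e, he⟩ := exists_norm_eq F zero_le_one
  have hnorm : ∀ r : ℝ, 0 ≤ r → ‖r • e‖ = r := fun r hr => by
    rw [norm_smul, he, mul_one, Real.norm_of_nonneg hr]
  refine ⟨fun r => g (r • e), fun r hr s hs hrs => hg _ _ ?_, fun x => ?_⟩
  · rw [hnorm r hr, hnorm s hs]; exact hrs
  · exact le_antisymm (hg _ _ (hnorm _ (norm_nonneg x)).le) (hg _ _ (hnorm _ (norm_nonneg x)).ge)

theorem stmt_4_general {N : ℕ} (u : EuclideanSpace ℝ (Fin N) → ℝ)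
    (hu : Continuous u) (cinf : EReal)
    (hlim : Filter.Tendsto (fun x => (u x : EReal)) (Filter.cocompact _) (nhds cinf))
    (hhalf : ∀ e : EuclideanSpace ℝ (Fin N), ‖e‖ = 1 → ∀ lam : ℝ,
      (∀ x, lam < ⟪x, e⟫ → u (x - (2 * (⟪x, e⟫ - lam)) • e) ≤ u x) ∨
      (∀ x, lam < ⟪x, e⟫ → u x ≤ u (x - (2 * (⟪x, e⟫ - lam)) • e))) :
    ∃ z : EuclideanSpace ℝ (Fin N), ∃ f : ℝ → ℝ, AntitoneOn f (Set.Ici 0) ∧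
      ((∀ x, u (x - z) = f ‖x‖) ∨ (∀ x, -u (x - z) = f ‖x‖)) := by
  obtain ⟨z, hz⟩ := exists_center_radially_antitone_or_monotone
    (continuous_coe_real_ereal.comp hu) hlim fun e he lam =>
      (hhalf e he lam).imp (fun h x hx => EReal.coe_le_coe_iff.mpr (h x hx))
        (fun h x hx => toDual_le_toDual.mpr (EReal.coe_le_coe_iff.mpr (h x hx)))
  have hshift : ∀ x, x - -z = z + x := fun x => by rw [sub_neg_eq_add, add_comm]
  refine ⟨-z, ?_⟩
  rcases hz with hz | hz
  · obtain ⟨f, hf, hfu⟩ := exists_antitoneOn_eq_comp_norm (g := fun x => u (z + x))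
      fun x y hxy => EReal.coe_le_coe_iff.mp (hz x y hxy)
    exact ⟨f, hf, Or.inl fun x => by rw [hshift, hfu]⟩
  · obtain ⟨f, hf, hfu⟩ := exists_antitoneOn_eq_comp_norm (g := fun x => -u (z + x))
      fun x y hxy => neg_le_neg (EReal.coe_le_coe_iff.mp (hz x y hxy))
    exact ⟨f, hf, Or.inr fun x => by rw [hshift, hfu]⟩

theorem stmt_4 {N : ℕ} (hN : 1 ≤ N) (u : EuclideanSpace ℝ (Fin N) → ℝ)
    (hu : Continuous u) (cinf : EReal)
    (hlim : Filter.Tendsto (fun x => (u x : EReal)) (Filter.cocompact _) (nhds cinf))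
    (hhalf : ∀ e : EuclideanSpace ℝ (Fin N), ‖e‖ = 1 → ∀ lam : ℝ,
      (∀ x, lam < ⟪x, e⟫ → u (x - (2 * (⟪x, e⟫ - lam)) • e) ≤ u x) ∨
      (∀ x, lam < ⟪x, e⟫ → u x ≤ u (x - (2 * (⟪x, e⟫ - lam)) • e))) :
    ∃ z : EuclideanSpace ℝ (Fin N), ∃ f : ℝ → ℝ, AntitoneOn f (Set.Ici 0) ∧
      ((∀ x, u (x - z) = f ‖x‖) ∨ (∀ x, -u (x - z) = f ‖x‖)) :=
  stmt_4_general u hu cinf hlim hhalf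
end

section
/- Let δ : ℝ^N → ℝ be twice continuously differentiable near 0 with δ(0) = 0, ∇δ(0) = e₂ (the second standard basis vector), and ∇²δ(0) diagonal. Set η̄ = e₂ - e₁ and δ̄(x) = δ(x - 2 x₁ e₁) (reflection in the first coordinate). Then for any s ∈ (0,1), δ(t η̄)^s - δ̄(t η̄)^s = o(t^{1+s}) as t → 0⁺. -/
/-!
Both `δ` and `δ̄` are evaluated along a line through the origin: `δ̄ (t • η̄) = δ (t • η')` with
`η' = e₂ + e₁`. The gradient `e₂` pairs to `1` with both `η̄` and `η'`, and since the Hessian is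
diagonal, `∇²δ(0)(η̄, η̄) = ∇²δ(0)(η', η')`. Hence the two restrictions have the same second-order
Taylor polynomial and differ by `o(t²)`, while both are at least `t / 2`. The mean value theorem
for `x ↦ x ^ s` on `[t / 2, ∞)`, where its derivative is `O(t ^ (s - 1))`, turns this into
`o(t ^ (s - 1) * t²) = o(t ^ (1 + s))`.
-/

open Asymptotics Filter Topology

theorem isLittleO_sub_pow_succ_of_eventually_hasDerivAt {E : Type*}
    [NormedAddCommGroup E] [NormedSpace ℝ E] {f f' : ℝ → E} {x₀ : ℝ} {n : ℕ}
    (hff' : ∀ᶠ x in 𝓝 x₀, HasDerivAt f (f' x) x) (hf' : f' =o[𝓝 x₀] fun x ↦ (x - x₀) ^ n) :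
    (fun x ↦ f x - f x₀) =o[𝓝 x₀] fun x ↦ (x - x₀) ^ (n + 1) := by
  obtain ⟨r, hr, hball⟩ := Metric.eventually_nhds_iff_ball.1 hff'
  have hnhds : 𝓝[Metric.ball x₀ r] x₀ = 𝓝 x₀ :=
    Metric.isOpen_ball.nhdsWithin_eq (Metric.mem_ball_self hr)
  have := (convex_ball x₀ r).isLittleO_pow_succ_real (Metric.mem_ball_self hr)
    (fun x hx ↦ (hball x hx).hasDerivWithinAt) (hnhds ▸ hf')
  rwa [hnhds] at this

theorem HasDerivAt.eventually_add_mul_lt_of_lt {g : ℝ → ℝ} {g' c : ℝ} (hg : HasDerivAt g g' 0)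
    (hc : c < g') : ∀ᶠ t in 𝓝[>] 0, g 0 + c * t < g t := by
  filter_upwards [hg.tendsto_slope_zero_right.eventually (lt_mem_nhds hc), self_mem_nhdsWithin]
    with t hslope (ht : 0 < t)
  rw [zero_add, smul_eq_mul, lt_inv_mul_iff₀ ht] at hslope
  linarith

section LineRestriction

variable {E F : Type*} [NormedAddCommGroup E] [NormedSpace ℝ E]
  [NormedAddCommGroup F] [NormedSpace ℝ F]

theorem hasDerivAt_comp_smul {f : E → F} {v : E} {t : ℝ}
    (hf : DifferentiableAt ℝ f (t • v)) :
    HasDerivAt (fun u : ℝ ↦ f (u • v)) (fderiv ℝ f (t • v) v) t := by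
  simpa [Function.comp_def] using
    hf.hasFDerivAt.comp_hasDerivAt t ((hasDerivAt_id t).smul_const v)

theorem hasDerivAt_fderiv_comp_smul {f : E → F} {v w : E}
    (hf : DifferentiableAt ℝ (fderiv ℝ f) 0) :
    HasDerivAt (fun t : ℝ ↦ fderiv ℝ f (t • v) w) (fderiv ℝ (fderiv ℝ f) 0 v w) 0 := by
  simpa using (hasDerivAt_comp_smul (f := fderiv ℝ f) (v := v) (t := 0)
    (by rwa [zero_smul])).clm_apply (hasDerivAt_const 0 w)

theorem eventually_differentiableAt_comp_smul {f : E → F} (hf : ContDiffAt ℝ 2 f 0) (v : E) :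
    ∀ᶠ t in 𝓝 (0 : ℝ), DifferentiableAt ℝ f (t • v) := by
  have hv : Tendsto (fun t : ℝ ↦ t • v) (𝓝 0) (𝓝 0) := by
    simpa using (tendsto_id (x := 𝓝 (0 : ℝ))).smul_const v
  exact hv.eventually ((hf.eventually (by simp)).mono fun x hx ↦ hx.differentiableAt two_ne_zero)

theorem isLittleO_sq_sub_comp_smul {f : E → F} (hf : ContDiffAt ℝ 2 f 0) {v w : E}
    (h₁ : fderiv ℝ f 0 v = fderiv ℝ f 0 w)
    (h₂ : fderiv ℝ (fderiv ℝ f) 0 v v = fderiv ℝ (fderiv ℝ f) 0 w w) :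
    (fun t : ℝ ↦ f (t • v) - f (t • w)) =o[𝓝 0] fun t ↦ t ^ 2 := by
  have hderiv : ∀ᶠ t in 𝓝 (0 : ℝ), HasDerivAt (fun t ↦ f (t • v) - f (t • w))
      (fderiv ℝ f (t • v) v - fderiv ℝ f (t • w) w) t := by
    filter_upwards [eventually_differentiableAt_comp_smul hf v,
      eventually_differentiableAt_comp_smul hf w] with t hv hw
    exact (hasDerivAt_comp_smul hv).sub (hasDerivAt_comp_smul hw)
  have hf' : DifferentiableAt ℝ (fderiv ℝ f) 0 :=
    (hf.fderiv_right (m := 1) (by norm_num)).differentiableAt one_ne_zero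
  have hg' : HasDerivAt (fun t : ℝ ↦ fderiv ℝ f (t • v) v - fderiv ℝ f (t • w) w) 0 0 := by
    have := (hasDerivAt_fderiv_comp_smul (v := v) (w := v) hf').sub
      (hasDerivAt_fderiv_comp_smul (v := w) (w := w) hf')
    rwa [h₂, sub_self] at this
  have hg'o : (fun t : ℝ ↦ fderiv ℝ f (t • v) v - fderiv ℝ f (t • w) w) =o[𝓝 0]
      fun t ↦ (t - 0) ^ 1 := by
    simpa [h₁] using hg'.isLittleO
  simpa using isLittleO_sub_pow_succ_of_eventually_hasDerivAt hderiv hg'o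

theorem eventually_add_mul_lt_comp_smul {f : E → ℝ} (hf : DifferentiableAt ℝ f 0) {v : E} {c : ℝ}
    (hc : c < fderiv ℝ f 0 v) : ∀ᶠ t in 𝓝[>] 0, f 0 + c * t < f (t • v) := by
  have hder := hasDerivAt_comp_smul (v := v) (t := 0) (by rwa [zero_smul])
  rw [zero_smul] at hder
  simpa using hder.eventually_add_mul_lt_of_lt hc

end LineRestriction

theorem ContinuousLinearMap.apply_sub_apply_sub_eq {E F : Type*} [NormedAddCommGroup E]
    [NormedSpace ℝ E] [NormedAddCommGroup F] [NormedSpace ℝ F] (Q : E →L[ℝ] E →L[ℝ] F)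
    {a b : E} (hab : Q a b = 0) (hba : Q b a = 0) :
    Q (a - b) (a - b) = Q (a + b) (a + b) := by
  simp [hab, hba]

theorem Real.abs_rpow_sub_rpow_le {s m a b : ℝ} (hs : s ≤ 1) (hm : 0 < m) (ha : m ≤ a)
    (hb : m ≤ b) : |a ^ s - b ^ s| ≤ |s| * m ^ (s - 1) * |a - b| := by
  have hbound : ∀ x ∈ Set.Ici m, ‖s * x ^ (s - 1)‖ ≤ |s| * m ^ (s - 1) := fun x hx ↦ by
    rw [norm_mul, Real.norm_eq_abs, Real.norm_of_nonneg (Real.rpow_nonneg (hm.le.trans hx) _)]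
    exact mul_le_mul_of_nonneg_left (Real.rpow_le_rpow_of_nonpos hm hx (by linarith))
      (abs_nonneg s)
  simpa using (convex_Ici m).norm_image_sub_le_of_norm_hasDerivWithin_le (f := fun x ↦ x ^ s)
    (fun x hx ↦ (Real.hasDerivAt_rpow_const (Or.inl (hm.trans_le hx).ne')).hasDerivWithinAt)
    hbound hb ha

theorem rpow_sub_rpow_isLittleO {s k : ℝ} (hs : s ≤ 1) (hk : 0 < k) {a b : ℝ → ℝ}
    (ha : ∀ᶠ t in 𝓝[>] 0, k * t ≤ a t) (hb : ∀ᶠ t in 𝓝[>] 0, k * t ≤ b t)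
    (hab : (fun t ↦ a t - b t) =o[𝓝[>] 0] fun t ↦ t ^ 2) :
    (fun t ↦ a t ^ s - b t ^ s) =o[𝓝[>] 0] fun t ↦ t ^ (1 + s) := by
  have hO : (fun t ↦ a t ^ s - b t ^ s) =O[𝓝[>] 0] fun t ↦ t ^ (s - 1) * (a t - b t) := by
    refine IsBigO.of_bound (|s| * k ^ (s - 1)) ?_
    filter_upwards [ha, hb, self_mem_nhdsWithin] with t hat hbt (ht : 0 < t)
    calc ‖a t ^ s - b t ^ s‖ ≤ |s| * (k * t) ^ (s - 1) * |a t - b t| :=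
          Real.abs_rpow_sub_rpow_le hs (by positivity) hat hbt
      _ = |s| * k ^ (s - 1) * ‖t ^ (s - 1) * (a t - b t)‖ := by
          rw [Real.mul_rpow hk.le ht.le, norm_mul, Real.norm_eq_abs, Real.norm_eq_abs,
            abs_of_nonneg (Real.rpow_nonneg ht.le _)]
          ring
  refine (hO.trans_isLittleO ((isBigO_refl (fun t ↦ t ^ (s - 1)) _).mul_isLittleO hab)).congr'
    EventuallyEq.rfl ?_
  filter_upwards [self_mem_nhdsWithin] with t (ht : 0 < t)
  rw [← Real.rpow_add_natCast ht.ne']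
  ring_nf

theorem Function.update_neg_smul_single_sub_single {ι R : Type*} [DecidableEq ι] [Ring R]
    {i j : ι} (hij : i ≠ j) (t : R) :
    Function.update (t • (Pi.single j 1 - Pi.single i 1)) i
      (-(t • (Pi.single j 1 - Pi.single i 1 : ι → R)) i) = t • (Pi.single j 1 + Pi.single i 1) := by
  ext k
  by_cases hki : k = i
  · subst hki; simp [hij]
  · by_cases hkj : k = j
    · subst hkj; simp [hki]
    · simp [hki, hkj]

theorem stmt_7 {N : ℕ} (s : ℝ) (hs : s ∈ Set.Ioo (0:ℝ) 1)
    (δ : (Fin (N + 2) → ℝ) → ℝ)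
    (hC2 : ContDiffAt ℝ 2 δ 0) (hδ0 : δ 0 = 0)
    (hgrad : ∀ v : Fin (N + 2) → ℝ, fderiv ℝ δ 0 v = v 1)
    (hhess : ∀ i j : Fin (N + 2), i ≠ j →
      fderiv ℝ (fderiv ℝ δ) 0 (Pi.single i 1) (Pi.single j 1) = 0)
    (η : Fin (N + 2) → ℝ) (hη : η = Pi.single 1 1 - Pi.single 0 1)
    (δbar : (Fin (N + 2) → ℝ) → ℝ)
    (hδbar : ∀ x, δbar x = δ (Function.update x 0 (-(x 0)))) :
    (fun t : ℝ => (δ (t • η)) ^ s - (δbar (t • η)) ^ s)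
      =o[nhdsWithin 0 (Set.Ioi 0)] fun t : ℝ => t ^ (1 + s) := by
  have h01 : (0 : Fin (N + 2)) ≠ 1 := by simp
  set η' : Fin (N + 2) → ℝ := Pi.single 1 1 + Pi.single 0 1
  have hbar (t : ℝ) : δbar (t • η) = δ (t • η') := by
    rw [hδbar, hη, Function.update_neg_smul_single_sub_single h01]
  have hgradη : fderiv ℝ δ 0 η = 1 := by simp [hgrad, hη]
  have hgradη' : fderiv ℝ δ 0 η' = 1 := by simp [η', hgrad]
  have hhessη : fderiv ℝ (fderiv ℝ δ) 0 η η = fderiv ℝ (fderiv ℝ δ) 0 η' η' :=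
    hη ▸ ContinuousLinearMap.apply_sub_apply_sub_eq _ (hhess 1 0 h01.symm) (hhess 0 1 h01)
  have hlower (v : Fin (N + 2) → ℝ) (hv : fderiv ℝ δ 0 v = 1) :
      ∀ᶠ t in 𝓝[>] 0, 2⁻¹ * t ≤ δ (t • v) :=
    (eventually_add_mul_lt_comp_smul (hC2.differentiableAt two_ne_zero) (v := v) (c := 2⁻¹)
      (by norm_num [hv])).mono fun t ht ↦ by rw [hδ0] at ht; linarith
  simp_rw [hbar]
  exact rpow_sub_rpow_isLittleO hs.2.le (by norm_num) (hlower η hgradη) (hlower η' hgradη')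
    ((isLittleO_sq_sub_comp_smul hC2 (hgradη.trans hgradη'.symm) hhessη).mono
      nhdsWithin_le_nhds)
end
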